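/- Fix λ > 0, θ ≠ 0, scalars π > 0 and p ∈ ℝ, and define for τ > 0: e(τ) = -(2τ²θ⁴ + 3τθ² + 1)/(τθ(2τθ² + 3)) and M(τ) = λτθ⁴(2τθ² + 3)p / (λτθ⁴(2τθ² + 3)π + (τθ⁴ + θ²)^{3/2}). Then as τ → 0⁺, M(τ)·e(τ) → -λ·sign(θ)·p and M(τ) → 0. -/
import Mathlib


/-- limits of the smoothed-ℓ₁ EKF gain/innovation terms as τ → 0⁺:
M(τ)·e(τ) → -λ·sign(θ)·p and M(τ) → 0. -/
theorem stmt5 (lam θ pi p : ℝ) (hlam : 0 < lam) (hθ : θ ≠ 0) (hpi : 0 < pi)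
    (e M : ℝ → ℝ)
    (he : ∀ τ, e τ = -(2*τ^2*θ^4 + 3*τ*θ^2 + 1) / (τ*θ*(2*τ*θ^2 + 3)))
    (hM : ∀ τ, M τ = lam*τ*θ^4*(2*τ*θ^2 + 3)*p /
        (lam*τ*θ^4*(2*τ*θ^2 + 3)*pi + (τ*θ^4 + θ^2) ^ ((3:ℝ)/2))) :
    Filter.Tendsto (fun τ => M τ * e τ) (nhdsWithin 0 (Set.Ioi 0))
      (nhds (-lam * Real.sign θ * p)) ∧
    Filter.Tendsto M (nhdsWithin 0 (Set.Ioi 0)) (nhds 0) := by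
  have hθ2 : (0:ℝ) < θ^2 := by positivity
  set D : ℝ → ℝ := fun τ => lam*τ*θ^4*(2*τ*θ^2 + 3)*pi + (τ*θ^4 + θ^2) ^ ((3:ℝ)/2)
    with hDdef
  have habs : ((θ^2:ℝ)) ^ ((3:ℝ)/2) = |θ|^3 := by
    rw [show θ^2 = |θ|^2 by rw [sq_abs], ← Real.rpow_natCast |θ| 2,
      ← Real.rpow_mul (abs_nonneg θ)]
    rw [show ((2:ℕ):ℝ) * ((3:ℝ)/2) = ((3:ℕ):ℝ) by norm_num, Real.rpow_natCast]
  have habspos : (0:ℝ) < |θ|^3 := by positivity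
  -- continuity of the denominator at 0
  have hDcont : ContinuousAt D 0 := by
    apply ContinuousAt.add
    · fun_prop
    · exact (ContinuousAt.rpow_const (by fun_prop) (Or.inr (by norm_num)))
  have hD0 : D 0 = |θ|^3 := by
    simp [hDdef, habs]
  have hDten : Filter.Tendsto D (nhdsWithin 0 (Set.Ioi 0)) (nhds (|θ|^3)) := by
    rw [← hD0]
    exact hDcont.continuousWithinAt
  have hDpos : ∀ τ : ℝ, 0 < τ → 0 < D τ := by
    intro τ hτ
    have h1 : 0 < lam*τ*θ^4*(2*τ*θ^2 + 3)*pi := by positivity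
    have h2 : 0 < (τ*θ^4 + θ^2) ^ ((3:ℝ)/2) := by
      apply Real.rpow_pos_of_pos; positivity
    simpa [hDdef] using add_pos h1 h2
  -- the M·e limit
  have hME : ∀ τ ∈ Set.Ioi (0:ℝ),
      M τ * e τ = -(lam*θ^3*(2*τ^2*θ^4 + 3*τ*θ^2 + 1)*p) / D τ := by
    intro τ hτ
    have hτp : (0:ℝ) < τ := hτ
    have hτ0 : τ ≠ 0 := ne_of_gt hτp
    have h3 : (2*τ*θ^2 + 3 : ℝ) ≠ 0 := by positivity
    have hDne : lam*τ*θ^4*(2*τ*θ^2 + 3)*pi + (τ*θ^4 + θ^2) ^ ((3:ℝ)/2) ≠ 0 := by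
      have := hDpos τ hτ
      simpa [hDdef] using ne_of_gt this
    rw [hM, he]
    simp only [hDdef]
    field_simp
  have hnum : Filter.Tendsto (fun τ : ℝ => -(lam*θ^3*(2*τ^2*θ^4 + 3*τ*θ^2 + 1)*p))
      (nhdsWithin 0 (Set.Ioi 0)) (nhds (-(lam*θ^3*p))) := by
    have hc : ContinuousAt (fun τ : ℝ => -(lam*θ^3*(2*τ^2*θ^4 + 3*τ*θ^2 + 1)*p)) 0 := by
      fun_prop
    have h : Filter.Tendsto (fun τ : ℝ => -(lam*θ^3*(2*τ^2*θ^4 + 3*τ*θ^2 + 1)*p))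
        (nhdsWithin 0 (Set.Ioi 0))
        (nhds (-(lam*θ^3*(2*(0:ℝ)^2*θ^4 + 3*0*θ^2 + 1)*p))) :=
      hc.tendsto.mono_left nhdsWithin_le_nhds
    have hv : -(lam*θ^3*(2*(0:ℝ)^2*θ^4 + 3*0*θ^2 + 1)*p) = -(lam*θ^3*p) := by norm_num
    rwa [hv] at h
  have hval : -(lam*θ^3*p) / |θ|^3 = -lam * Real.sign θ * p := by
    rcases hθ.lt_or_gt with h | h
    · rw [Real.sign_of_neg h, abs_of_neg h,
        div_eq_iff (pow_ne_zero 3 (neg_ne_zero.mpr hθ))]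
      ring
    · rw [Real.sign_of_pos h, abs_of_pos h, div_eq_iff (pow_ne_zero 3 hθ)]
      ring
  constructor
  · have hten : Filter.Tendsto (fun τ => -(lam*θ^3*(2*τ^2*θ^4 + 3*τ*θ^2 + 1)*p) / D τ)
        (nhdsWithin 0 (Set.Ioi 0)) (nhds (-(lam*θ^3*p) / |θ|^3)) :=
      hnum.div hDten (ne_of_gt habspos)
    rw [hval] at hten
    refine hten.congr' ?_
    filter_upwards [self_mem_nhdsWithin] with τ hτ
    exact (hME τ hτ).symm
  · have hnum0 : Filter.Tendsto (fun τ : ℝ => lam*τ*θ^4*(2*τ*θ^2 + 3)*p)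
        (nhdsWithin 0 (Set.Ioi 0)) (nhds 0) := by
      have hc : ContinuousAt (fun τ : ℝ => lam*τ*θ^4*(2*τ*θ^2 + 3)*p) 0 := by fun_prop
      have h : Filter.Tendsto (fun τ : ℝ => lam*τ*θ^4*(2*τ*θ^2 + 3)*p)
          (nhdsWithin 0 (Set.Ioi 0)) (nhds (lam*0*θ^4*(2*0*θ^2 + 3)*p)) :=
        hc.tendsto.mono_left nhdsWithin_le_nhds
      have hv : lam*(0:ℝ)*θ^4*(2*0*θ^2 + 3)*p = 0 := by ring
      rwa [hv] at h
    have hten := hnum0.div hDten (ne_of_gt habspos)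
    rw [zero_div] at hten
    refine hten.congr' ?_
    filter_upwards [self_mem_nhdsWithin] with τ hτ
    exact (hM τ).symm
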